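/- arXiv:2601.14097 — 9 statements merged into one kernel-verified Lean document; each statement's English description precedes it below -/
import Mathlib

section
/- Let G be a commutative group and M a commutative group (written multiplicatively), and let ω : G → G → M satisfy the 2-cocycle identity. Define h_ω : G → (G → M) by h_ω(g)(k) = ω(g,k)·ω(k,g)⁻¹. Then h_ω is multiplicative in each variable: for all g, g', k, k' ∈ G one has h_ω(g·g')(k) = h_ω(g)(k)·h_ω(g')(k) and h_ω(g)(k·k') = h_ω(g)(k)·h_ω(g)(k'). In particular, h_ω is a group homomorphism from G into the group of homomorphisms from G to M. -/
/-!
Cancelling `ω(g,g')` and `ω(gk,g')` between the cocycle identities at `(g,g',k)`, `(k,g,g')` and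
`(g,k,g')` shows that `h_ω(·)(k)` is multiplicative. Since `h_ω(k)(g) = h_ω(g)(k)⁻¹`,
multiplicativity in the second variable follows from that in the first.
-/

section SymmetryMap

variable {G M : Type*}

def IsTwoCocycle [Mul G] [Mul M] (ω : G → G → M) : Prop :=
  ∀ g h l : G, ω g h * ω (g * h) l = ω g (h * l) * ω h l

def symmetryMap [Group M] (ω : G → G → M) (g k : G) : M :=
  ω g k * (ω k g)⁻¹

theorem symmetryMap_swap [Group M] (ω : G → G → M) (g k : G) :
    symmetryMap ω k g = (symmetryMap ω g k)⁻¹ := by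
  rw [symmetryMap, symmetryMap, mul_inv_rev, inv_inv]

variable [CommGroup G] [CommGroup M] {ω : G → G → M}

theorem IsTwoCocycle.symmetryMap_mul_left (hω : IsTwoCocycle ω) (g g' k : G) :
    symmetryMap ω (g * g') k = symmetryMap ω g k * symmetryMap ω g' k := by
  simp only [symmetryMap, ← div_eq_mul_inv]
  rw [div_mul_div_comm, div_eq_div_iff_mul_eq_mul]
  have hgg'k := hω g g' k
  have hkgg' : ω k g * ω (g * k) g' = ω k (g * g') * ω g g' := by
    rw [mul_comm g k]; exact hω k g g'
  have hgkg' : ω g k * ω (g * k) g' = ω g (g' * k) * ω k g' := by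
    rw [mul_comm g' k]; exact hω g k g'
  refine mul_right_cancel (b := ω g g' * ω (g * k) g') ?_
  calc ω (g * g') k * (ω k g * ω k g') * (ω g g' * ω (g * k) g')
      = ω g g' * ω (g * g') k * (ω k g * ω (g * k) g') * ω k g' := by ac_rfl
    _ = ω g (g' * k) * ω g' k * (ω k (g * g') * ω g g') * ω k g' := by rw [hgg'k, hkgg']
    _ = ω g k * ω (g * k) g' * ω g' k * ω k (g * g') * ω g g' := by rw [hgkg']; ac_rfl
    _ = ω g k * ω g' k * ω k (g * g') * (ω g g' * ω (g * k) g') := by ac_rfl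

theorem IsTwoCocycle.symmetryMap_mul_right (hω : IsTwoCocycle ω) (g k k' : G) :
    symmetryMap ω g (k * k') = symmetryMap ω g k * symmetryMap ω g k' := by
  rw [symmetryMap_swap, hω.symmetryMap_mul_left, mul_inv, ← symmetryMap_swap,
    ← symmetryMap_swap]

end SymmetryMap

/-- For a 2-cocycle `ω` on a commutative group `G` with values in a commutative group `M`,
the map `h_ω(g)(k) = ω(g,k)·ω(k,g)⁻¹` is multiplicative in each variable. -/
theorem symmetry_map_bihomomorphism
    {G M : Type*} [CommGroup G] [CommGroup M] (ω : G → G → M)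
    (hω : ∀ g h l : G, ω g h * ω (g * h) l = ω g (h * l) * ω h l) :
    (∀ g g' k : G,
      ω (g * g') k * (ω k (g * g'))⁻¹ =
        (ω g k * (ω k g)⁻¹) * (ω g' k * (ω k g')⁻¹)) ∧
    (∀ g k k' : G,
      ω g (k * k') * (ω (k * k') g)⁻¹ =
        (ω g k * (ω k g)⁻¹) * (ω g k' * (ω k' g)⁻¹)) :=
  ⟨IsTwoCocycle.symmetryMap_mul_left hω, IsTwoCocycle.symmetryMap_mul_right hω⟩
end

section
/- Fix n ∈ ℕ and a countable type ι, and let G = (Fin n → ℝ) × (ι →₀ ℤ) be the topological additive group obtained as the product of the vector group ℝⁿ with its standard topology and the free abelian group ι →₀ ℤ with the discrete topology. Let φ : G → ℝ be a continuous surjective additive group homomorphism. Then there exist an ℝ-linear subspace V' of (Fin n → ℝ) with dim V' = n − 1 and an additive subgroup Z' of G which is isomorphic as an additive group to ι →₀ ℤ, such that the map V' × Z' → G sending (v, z) to (v, 0) + z is injective and its image is exactly the kernel of φ. -/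
/-!
On the vector part, the continuous additive map `φ` is a linear functional `f`, and `f ≠ 0`
because the discrete part is countable while `φ` hits every real number. Choose `w` with
`f w = 1` and let `χ` be the restriction of `φ` to the discrete part. Then `ker φ` is the direct
sum of the hyperplane `ker f` and the graph of `z ↦ -χ z • w`, which is a copy of `ι →₀ ℤ`.
-/

open Function

theorem AddMonoidHom.comp_inl_ne_zero_of_surjective {M A B : Type*} [AddZeroClass M]
    [AddZeroClass A] [AddZeroClass B] [Countable A] [Uncountable B] {φ : M × A →+ B}
    (hφ : Surjective φ) : φ.comp (inl M A) ≠ 0 := by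
  intro h
  have hrange : Set.range φ ⊆ Set.range (φ.comp (inr M A)) := by
    rintro _ ⟨⟨x, z⟩, rfl⟩
    refine ⟨z, ?_⟩
    have hx : φ (x, 0) = 0 := DFunLike.congr_fun h x
    rw [show (x, z) = (x, 0) + (0, z) by simp, map_add, hx, zero_add]
    rfl
  exact not_countable (Set.countable_univ_iff.mp
    (hφ.range_eq ▸ (Set.countable_range _).mono hrange))

section KernelSplitting

variable {R V A : Type*} [Ring R] [AddCommGroup V] [Module R V] [AddCommGroup A]

def kerSection (χ : A →+ R) (w : V) : A →+ V × A :=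
  (((smulAddHom R V).flip w).comp (-χ)).prod (AddMonoidHom.id A)

@[simp]
theorem kerSection_apply (χ : A →+ R) (w : V) (z : A) : kerSection χ w z = (-χ z • w, z) :=
  rfl

theorem kerSection_injective (χ : A →+ R) (w : V) : Injective (kerSection χ w) :=
  fun _ _ h => congrArg Prod.snd h

theorem kerSection_snd_of_mem_range {χ : A →+ R} {w : V} {c : V × A}
    (hc : c ∈ (kerSection χ w).range) : kerSection χ w c.2 = c := by
  obtain ⟨z, rfl⟩ := hc
  rfl

theorem injective_add_kerSection (χ : A →+ R) (w : V) (p : Submodule R V) :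
    Injective fun q : p × (kerSection χ w).range => ((q.1 : V), (0 : A)) + (q.2 : V × A) := by
  rintro ⟨⟨v₁, hv₁⟩, ⟨c₁, hc₁⟩⟩ ⟨⟨v₂, hv₂⟩, ⟨c₂, hc₂⟩⟩ h
  have hc : c₁ = c₂ := by
    rw [← kerSection_snd_of_mem_range hc₁, ← kerSection_snd_of_mem_range hc₂,
      show c₁.2 = c₂.2 by simpa using congrArg Prod.snd h]
  subst hc
  simpa using congrArg Prod.fst h

theorem range_add_kerSection (f : V →ₗ[R] R) (χ : A →+ R) {w : V} (hw : f w = 1) :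
    Set.range (fun q : LinearMap.ker f × (kerSection χ w).range =>
      ((q.1 : V), (0 : A)) + (q.2 : V × A)) = ((f.toAddMonoidHom.coprod χ).ker : Set (V × A)) := by
  ext ⟨x, z⟩
  simp only [Set.mem_range, SetLike.mem_coe, AddMonoidHom.mem_ker, AddMonoidHom.coprod_apply]
  constructor
  · rintro ⟨⟨⟨v, hv⟩, ⟨c, z', rfl⟩⟩, h⟩
    simp only [kerSection_apply, Prod.mk_add_mk, zero_add, Prod.mk.injEq] at h
    obtain ⟨rfl, rfl⟩ := h
    simp [LinearMap.mem_ker.mp hv, hw]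
  · intro h
    refine ⟨⟨⟨x + χ z • w, by simpa [hw] using h⟩, ⟨_, z, rfl⟩⟩, ?_⟩
    simp

end KernelSplitting

theorem kernel_splitting_real_general
    (n : ℕ) (ι : Type*) [Countable ι]
    [TopologicalSpace (ι →₀ ℤ)]
    (φ : ((Fin n → ℝ) × (ι →₀ ℤ)) →+ ℝ)
    (hcont : Continuous φ) (hsurj : Function.Surjective φ) :
    ∃ (V' : Submodule ℝ (Fin n → ℝ))
      (Z' : AddSubgroup ((Fin n → ℝ) × (ι →₀ ℤ))),
      Module.finrank ℝ V' = n - 1 ∧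
      Nonempty (Z' ≃+ (ι →₀ ℤ)) ∧
      Function.Injective
        (fun p : V' × Z' =>
          (((p.1 : Fin n → ℝ), (0 : ι →₀ ℤ)) + (p.2 : (Fin n → ℝ) × (ι →₀ ℤ)))) ∧
      Set.range
        (fun p : V' × Z' =>
          (((p.1 : Fin n → ℝ), (0 : ι →₀ ℤ)) + (p.2 : (Fin n → ℝ) × (ι →₀ ℤ)))) =
        (φ.ker : Set ((Fin n → ℝ) × (ι →₀ ℤ))) := by
  let χ := φ.comp (AddMonoidHom.inr _ _)
  have hcont_inl : Continuous (φ.comp (AddMonoidHom.inl _ _)) :=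
    hcont.comp (continuous_id.prodMk continuous_const)
  let f : Module.Dual ℝ (Fin n → ℝ) :=
    ((φ.comp (AddMonoidHom.inl _ _)).toRealLinearMap hcont_inl).toLinearMap
  have hf : f ≠ 0 := fun h => AddMonoidHom.comp_inl_ne_zero_of_surjective hsurj
    (AddMonoidHom.ext fun x => LinearMap.congr_fun h x)
  obtain ⟨w, hw⟩ := LinearMap.surjective hf 1
  have hφ : φ = f.toAddMonoidHom.coprod χ := by
    change φ = (φ.comp (AddMonoidHom.inl _ _)).coprod (φ.comp (AddMonoidHom.inr _ _))
    rw [← AddMonoidHom.comp_coprod, AddMonoidHom.coprod_inl_inr, AddMonoidHom.comp_id]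
  refine ⟨LinearMap.ker f, (kerSection χ w).range, ?_,
    ⟨(AddMonoidHom.ofInjective (kerSection_injective χ w)).symm⟩,
    injective_add_kerSection χ w _, hφ ▸ range_add_kerSection f χ hw⟩
  have hrank := Module.Dual.finrank_ker_add_one_of_ne_zero hf
  rw [Module.finrank_fin_fun] at hrank
  omega

/-- Lemma: if `φ : ℝⁿ × (⊕ι ℤ) → ℝ` (with `ℝⁿ` a vector group and `⊕ι ℤ` discrete) is a
continuous surjective homomorphism, then `ker φ` splits as `V' × Z'` with `V'` a vector
subgroup of codimension one and `Z'` free abelian of the same rank as `⊕ι ℤ`. -/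
theorem kernel_splitting_real
    (n : ℕ) (ι : Type*) [Countable ι]
    [TopologicalSpace (ι →₀ ℤ)] [DiscreteTopology (ι →₀ ℤ)]
    (φ : ((Fin n → ℝ) × (ι →₀ ℤ)) →+ ℝ)
    (hcont : Continuous φ) (hsurj : Function.Surjective φ) :
    ∃ (V' : Submodule ℝ (Fin n → ℝ))
      (Z' : AddSubgroup ((Fin n → ℝ) × (ι →₀ ℤ))),
      Module.finrank ℝ V' = n - 1 ∧
      Nonempty (Z' ≃+ (ι →₀ ℤ)) ∧
      Function.Injective
        (fun p : V' × Z' =>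
          (((p.1 : Fin n → ℝ), (0 : ι →₀ ℤ)) + (p.2 : (Fin n → ℝ) × (ι →₀ ℤ)))) ∧
      Set.range
        (fun p : V' × Z' =>
          (((p.1 : Fin n → ℝ), (0 : ι →₀ ℤ)) + (p.2 : (Fin n → ℝ) × (ι →₀ ℤ)))) =
        (φ.ker : Set ((Fin n → ℝ) × (ι →₀ ℤ))) :=
  kernel_splitting_real_general n ι φ hcont hsurj
end

section
/- Let F be a finite group acting on a T0 topological space X such that for every g ∈ F the map x ↦ g•x is continuous. Then for every x ∈ X the orbit F•x = {g•x : g ∈ F}, equipped with the subspace topology, is discrete. -/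
/-!
If `a` specializes to `g • a`, applying the continuous maps `x ↦ g ^ k • x` gives the chain
`a ⤳ g • a ⤳ g ^ 2 • a ⤳ ⋯`. As `g` has finite order, `g⁻¹` is one of these powers, so
`a ⤳ g⁻¹ • a`, and translating by `g` gives `g • a ⤳ a`. In a T₀ space mutual specialization
forces `g • a = a`, so the orbit is T₁ in the subspace topology; being finite, it is discrete.
-/

open MulAction

section

variable {G X : Type*} [TopologicalSpace X]

theorem Specializes.pow_smul [Monoid G] [MulAction G X] {g : G} {a : X}
    (hc : Continuous fun x : X => g • x) (h : a ⤳ (g • a)) (n : ℕ) : a ⤳ (g ^ n • a) := by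
  induction n with
  | zero => simpa only [pow_zero, one_smul] using specializes_rfl
  | succ n ih => simpa only [pow_succ', mul_smul] using h.trans (ih.map hc)

theorem Specializes.smul_eq_of_isOfFinOrder [T0Space X] [Group G] [MulAction G X] {g : G}
    {a : X} (hg : IsOfFinOrder g) (hc : Continuous fun x : X => g • x) (h : a ⤳ (g • a)) :
    g • a = a := by
  obtain ⟨n, hn⟩ : g⁻¹ ∈ Submonoid.powers g :=
    hg.mem_powers_iff_mem_zpowers.mpr (Subgroup.inv_mem _ (Subgroup.mem_zpowers g))
  have hinv : a ⤳ (g⁻¹ • a) := hn ▸ h.pow_smul hc n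
  have hback : (g • a) ⤳ a := by simpa only [smul_inv_smul] using hinv.map hc
  exact (h.antisymm hback).eq.symm

theorem t1Space_orbit_of_isMulTorsion [T0Space X] [Group G] [MulAction G X]
    (hG : IsMulTorsion G) (hc : ∀ g : G, Continuous fun x : X => g • x) (x : X) :
    T1Space (orbit G x) := by
  rw [t1Space_iff_specializes_imp_eq]
  rintro ⟨a, ha⟩ ⟨b, hb⟩ h
  replace h : a ⤳ b := (subtype_specializes_iff _ _).mp h
  obtain ⟨g, rfl⟩ : b ∈ orbit G a := orbit_eq_iff.mpr ha ▸ hb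
  exact Subtype.ext (h.smul_eq_of_isOfFinOrder (hG g) (hc g)).symm

end

/-- If a finite group `F` acts by homeomorphisms on a T₀ space `X`, then every orbit is
discrete in the subspace topology. -/
theorem orbit_discrete_of_finite_group_action
    {F X : Type*} [Group F] [Finite F] [TopologicalSpace X] [T0Space X]
    [MulAction F X] (hc : ∀ g : F, Continuous fun x : X => g • x) (x : X) :
    DiscreteTopology (MulAction.orbit F x) := by
  have : Finite (orbit F x) := (Finite.finite_mulAction_orbit x).to_subtype
  have : T1Space (orbit F x) := t1Space_orbit_of_isMulTorsion isMulTorsion_of_finite hc x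
  exact Finite.instDiscreteTopology
end

section
/- Let F be a finite group acting on a T0 topological space X such that for every g ∈ F the map x ↦ g•x is continuous, and let x ∈ X be such that the singleton {x} is locally closed in X. Then the orbit F•x = {g•x : g ∈ F} is locally closed in X. -/
/-!
A point of the orbit that specializes to another one is, after translating, a point `g • x`
with `g • x ⤳ x`. Iterating gives `gⁿ • x ⤳ x` for all `n`, and since `g` has finite order,
`g⁻¹` is such a power, so also `x ⤳ g • x`; in a T₀ space this forces `g • x = x`. Thus the
finite orbit is a set of locally closed points none of which lies in the closure of another,
and then `closure S \ S` is the finite union of the closed sets `closure {s} \ {s}`.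
-/

open Pointwise Set

theorem IsLocallyClosed.smul {G X : Type*} [Group G] [MulAction G X] [TopologicalSpace X]
    [ContinuousConstSMul G X] {s : Set X} (hs : IsLocallyClosed s) (g : G) :
    IsLocallyClosed (g • s) := by
  rw [← preimage_smul_inv]
  exact hs.preimage (continuous_const_smul g⁻¹)

theorem isLocallyClosed_of_finite_of_specializes_imp_eq {X : Type*} [TopologicalSpace X]
    {S : Set X} (hS : S.Finite) (hlc : ∀ s ∈ S, IsLocallyClosed ({s} : Set X))
    (heq : ∀ s ∈ S, ∀ t ∈ S, s ⤳ t → s = t) : IsLocallyClosed S := by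
  have hclosure : closure S = ⋃ s ∈ S, closure {s} := by
    rw [← hS.closure_biUnion, biUnion_of_singleton]
  have hdiff : closure S \ S = ⋃ s ∈ S, closure {s} \ {s} := by
    ext y
    simp only [hclosure, mem_sdiff, mem_iUnion, mem_singleton_iff, exists_prop]
    constructor
    · rintro ⟨⟨s, hs, hy⟩, hyS⟩
      exact ⟨s, hs, hy, fun h => hyS (h ▸ hs)⟩
    · rintro ⟨s, hs, hy, hne⟩
      refine ⟨⟨s, hs, hy⟩, fun hyS => hne ?_⟩
      exact (heq s hs y hyS (specializes_iff_mem_closure.mpr hy)).symm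
  rw [isLocallyClosed_iff_isOpen_coborder, coborder, isOpen_compl_iff, hdiff]
  exact hS.isClosed_biUnion fun s hs => isOpen_compl_iff.mp (hlc s hs).isOpen_coborder

section Specializes

variable {G X : Type*} [TopologicalSpace X]

theorem smul_pow_specializes [Monoid G] [MulAction G X] [ContinuousConstSMul G X] {g : G}
    {x : X} (h : (g • x) ⤳ x) (n : ℕ) : (g ^ n • x) ⤳ x := by
  induction n with
  | zero => rw [pow_zero, one_smul]
  | succ n ih =>
    rw [pow_succ, mul_smul]
    exact (h.map (continuous_const_smul _)).trans ih

theorem IsOfFinOrder.smul_eq_of_smul_specializes [Group G] [MulAction G X]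
    [ContinuousConstSMul G X] [T0Space X] {g : G} (hg : IsOfFinOrder g) {x : X}
    (h : (g • x) ⤳ x) : g • x = x := by
  obtain ⟨n, hn⟩ : g⁻¹ ∈ Submonoid.powers g :=
    hg.mem_powers_iff_mem_zpowers.mpr (inv_mem (Subgroup.mem_zpowers g))
  have hx : x ⤳ (g • x) := by
    simpa [hn] using (smul_pow_specializes h n).map (continuous_const_smul g)
  exact (h.antisymm hx).eq

theorem MulAction.eq_of_specializes_of_mem_orbit [Group G] [Finite G] [MulAction G X]
    [ContinuousConstSMul G X] [T0Space X] {x y z : X} (hy : y ∈ orbit G x)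
    (hz : z ∈ orbit G x) (h : y ⤳ z) : y = z := by
  obtain ⟨g, rfl⟩ : y ∈ orbit G z := by rwa [orbit_eq_iff.mpr hz]
  exact (isOfFinOrder_of_finite g).smul_eq_of_smul_specializes h

end Specializes

/-- If a finite group `F` acts by homeomorphisms on a T₀ space `X` and `{x}` is locally
closed in `X`, then the orbit `F•x` is locally closed in `X`. -/
theorem orbit_isLocallyClosed_of_finite_group_action
    {F X : Type*} [Group F] [Finite F] [TopologicalSpace X] [T0Space X]
    [MulAction F X] (hc : ∀ g : F, Continuous fun x : X => g • x) (x : X)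
    (hx : IsLocallyClosed ({x} : Set X)) :
    IsLocallyClosed (MulAction.orbit F x) := by
  have : ContinuousConstSMul F X := ⟨hc⟩
  refine isLocallyClosed_of_finite_of_specializes_imp_eq (finite_range _) ?_
    fun y hy z hz => MulAction.eq_of_specializes_of_mem_orbit hy hz
  rintro _ ⟨g, rfl⟩
  simpa using hx.smul g
end

section
/- Let G be a group acting on a T0 topological space X such that for every g ∈ G the map x ↦ g•x is continuous. Let x ∈ X and g ∈ G, and suppose there exists a natural number n ≥ 1 with gⁿ•x = x (for instance, g has finite order). If g•x ∈ closure {x}, then g•x = x. -/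
/-!
Write `f = (g • ·)`. The hypothesis says `x ⤳ f x`, and a continuous map preserves
specialization, so `x ⤳ f x ⤳ f² x ⤳ ⋯`. Starting the chain at `f x` and running it up to
`fⁿ x = x` gives `f x ⤳ x`; in a T₀ space the two specializations force `f x = x`.
-/

theorem Specializes.iterate {X : Type*} [TopologicalSpace X] {f : X → X} (hf : Continuous f)
    {x : X} (h : x ⤳ f x) : ∀ k : ℕ, x ⤳ f^[k] x
  | 0 => specializes_rfl
  | k + 1 => by
    rw [Function.iterate_succ_apply']
    exact h.trans ((h.iterate hf k).map hf)

theorem Function.IsPeriodicPt.eq_of_specializes {X : Type*} [TopologicalSpace X] [T0Space X]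
    {f : X → X} (hf : Continuous f) {x : X} {n : ℕ} (hx : IsPeriodicPt f n x) (hn : 1 ≤ n)
    (h : x ⤳ f x) : f x = x := by
  have back : f x ⤳ x := by
    obtain ⟨m, rfl⟩ := Nat.exists_eq_add_of_le' hn
    simpa only [← Function.iterate_succ_apply, hx.eq] using (h.map hf).iterate hf m
  exact (back.antisymm h).eq

/-- If a group `G` acts by homeomorphisms on a T₀ space `X`, `gⁿ•x = x` for some `n ≥ 1`,
and `g•x ∈ closure {x}`, then `g•x = x`. -/
theorem smul_eq_self_of_mem_closure
    {G X : Type*} [Group G] [TopologicalSpace X] [T0Space X] [MulAction G X]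
    (hc : ∀ g : G, Continuous fun x : X => g • x)
    (x : X) (g : G) (hn : ∃ n : ℕ, 1 ≤ n ∧ g ^ n • x = x)
    (h : g • x ∈ closure ({x} : Set X)) :
    g • x = x := by
  obtain ⟨n, hn, hx⟩ := hn
  have periodic : Function.IsPeriodicPt (g • ·) n x := by
    simpa only [Function.IsPeriodicPt, Function.IsFixedPt, smul_iterate] using hx
  exact periodic.eq_of_specializes (hc g) hn (specializes_iff_mem_closure.mpr h)
end

section
/- Let X be a topological space and let s ⊆ X be a finite set such that: (i) for every p ∈ s the singleton {p} is locally closed in X, and (ii) for all p, q ∈ s, if p ∈ closure {q} then p = q. Then s is locally closed in X. -/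
open Set

lemma Set.Finite.closure_eq_biUnion_closure_singleton {X : Type*} [TopologicalSpace X]
    {s : Set X} (hs : s.Finite) : closure s = ⋃ p ∈ s, closure {p} := by
  conv_lhs => rw [← biUnion_of_singleton s]
  exact hs.closure_biUnion _

lemma Set.Finite.closure_sdiff_self_eq_biUnion {X : Type*} [TopologicalSpace X] {s : Set X}
    (hs : s.Finite) (hsep : ∀ p ∈ s, ∀ q ∈ s, p ∈ closure ({q} : Set X) → p = q) :
    closure s \ s = ⋃ p ∈ s, closure {p} \ {p} := by
  rw [hs.closure_eq_biUnion_closure_singleton]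
  ext x
  simp only [mem_sdiff, mem_iUnion, mem_singleton_iff, exists_prop]
  constructor
  · rintro ⟨⟨p, hp, hxp⟩, hxs⟩
    exact ⟨p, hp, hxp, fun hx_eq => hxs (hx_eq ▸ hp)⟩
  · rintro ⟨p, hp, hxp, hne⟩
    exact ⟨⟨p, hp, hxp⟩, fun hxs => hne (hsep x hxs p hp hxp)⟩

/-- A finite subset `s` of a topological space, each of whose points has locally closed
singleton and no point of which lies in the closure of another point of `s`, is locally
closed. -/
theorem finite_isLocallyClosed_of_separated
    {X : Type*} [TopologicalSpace X] (s : Set X) (hs : s.Finite)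
    (h1 : ∀ p ∈ s, IsLocallyClosed ({p} : Set X))
    (h2 : ∀ p ∈ s, ∀ q ∈ s, p ∈ closure ({q} : Set X) → p = q) :
    IsLocallyClosed s := by
  rw [isLocallyClosed_iff_isOpen_coborder, coborder, isOpen_compl_iff,
    hs.closure_sdiff_self_eq_biUnion h2]
  exact hs.isClosed_biUnion fun p hp => isOpen_compl_iff.mp (h1 p hp).isOpen_coborder
end

section
/- Let X be a topological space such that every nonempty closed subset Z ⊆ X contains a subset U which is dense in Z, open in the subspace topology of Z, and Hausdorff in the subspace topology (i.e., X is almost Hausdorff). Then for every x ∈ X the singleton {x} is locally closed in X. -/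
/-! A nonempty open subset of `closure {x}` contains `x`, since every point of `closure {x}` is a
specialization of `x`. So the dense, relatively open, Hausdorff `U ⊆ closure {x}` contains `x`; in
the T₁ space `U` the point `x` has no specialization other than itself, whence `U = {x}`, which is
open in `closure {x}`. -/

open Topology

theorem Set.eq_singleton_of_subset_closure_singleton {X : Type*} [TopologicalSpace X]
    {U : Set X} {x : X} [T1Space U] (hxU : x ∈ U) (hU : U ⊆ closure {x}) : U = {x} := by
  refine Set.eq_singleton_iff_unique_mem.2 ⟨hxU, fun u hu => ?_⟩
  have hspec : (⟨x, hxU⟩ : U) ⤳ ⟨u, hu⟩ :=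
    IsInducing.subtypeVal.specializes_iff.1 (specializes_iff_mem_closure.2 (hU hu))
  exact congrArg Subtype.val hspec.eq.symm

/-- In an almost Hausdorff space (every nonempty closed subset contains a dense,
relatively open, Hausdorff subset), every singleton is locally closed. -/
theorem singleton_isLocallyClosed_of_almostHausdorff
    {X : Type*} [TopologicalSpace X]
    (hAH : ∀ Z : Set X, IsClosed Z → Z.Nonempty →
      ∃ U : Set X, U ⊆ Z ∧ Z ⊆ closure U ∧
        (∃ V : Set X, IsOpen V ∧ U = V ∩ Z) ∧ T2Space U) :
    ∀ x : X, IsLocallyClosed ({x} : Set X) := by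
  intro x
  have hx : x ∈ closure {x} := subset_closure rfl
  obtain ⟨U, hUZ, hZU, ⟨V, hV, rfl⟩, hT2⟩ := hAH (closure {x}) isClosed_closure ⟨x, hx⟩
  obtain ⟨y, hyV, hy⟩ : (V ∩ closure {x}).Nonempty := closure_nonempty_iff.1 ⟨x, hZU hx⟩
  have hxV : x ∈ V := (specializes_iff_mem_closure.2 hy).mem_open hV hyV
  have hU : V ∩ closure {x} = {x} := Set.eq_singleton_of_subset_closure_singleton ⟨hxV, hx⟩ hUZ
  exact ⟨V, closure {x}, hV, isClosed_closure, hU.symm⟩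
end

section
/- Fix n ∈ ℕ and a countable type ι, and let G = (Fin n → ℝ) × (ι →₀ ℤ) be the topological additive group obtained as the product of the vector group ℝⁿ with its standard topology and the free abelian group ι →₀ ℤ with the discrete topology. If φ : G → ℝ is a continuous surjective additive group homomorphism, then the additive homomorphism from (Fin n → ℝ) to ℝ given by v ↦ φ(v, 0) is surjective. -/
/-! The restriction `ψ` of `φ` to `ℝⁿ` is a continuous additive map, hence `ℝ`-linear, so it is
either surjective or zero. If it were zero, `φ` would factor through the countable group `ι →₀ ℤ`,
which cannot map onto the uncountable `ℝ`. -/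

namespace AddMonoidHom

theorem surjective_or_eq_zero_of_continuous {E : Type*} [AddCommGroup E] [Module ℝ E]
    [TopologicalSpace E] [ContinuousSMul ℝ E] (f : E →+ ℝ) (hf : Continuous f) :
    Function.Surjective f ∨ f = 0 := by
  rcases (f.toRealLinearMap hf).toLinearMap.surjective_or_eq_zero with h | h
  · exact Or.inl (by simpa using h)
  · exact Or.inr (ext fun x => by simpa using LinearMap.congr_fun h x)

theorem eq_comp_snd_of_comp_inl_eq_zero {M N P : Type*} [AddZeroClass M] [AddZeroClass N]
    [AddCommMonoid P] (φ : M × N →+ P) (h : φ.comp (inl M N) = 0) :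
    φ = (φ.comp (inr M N)).comp (snd M N) := by
  calc φ = (φ.comp (inl M N)).coprod (φ.comp (inr M N)) := (coprod_unique φ).symm
    _ = (φ.comp (inr M N)).comp (snd M N) := by rw [h]; exact ext fun x => by simp

end AddMonoidHom

theorem vector_factor_surjective_real_general
    (n : ℕ) (ι : Type*) [Countable ι]
    [TopologicalSpace (ι →₀ ℤ)]
    (φ : ((Fin n → ℝ) × (ι →₀ ℤ)) →+ ℝ)
    (hcont : Continuous φ) (hsurj : Function.Surjective φ) :
    Function.Surjective (fun v : Fin n → ℝ => φ (v, 0)) := by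
  rcases (φ.comp (AddMonoidHom.inl _ _)).surjective_or_eq_zero_of_continuous
    (hcont.comp (continuous_id.prodMk continuous_const)) with h | h
  · exact h
  · rw [φ.eq_comp_snd_of_comp_inl_eq_zero h] at hsurj
    have : Function.Surjective (φ.comp (AddMonoidHom.inr _ _)) :=
      Function.Surjective.of_comp (g := Prod.snd) hsurj
    exact absurd this.countable not_countable

/-- If `φ : ℝⁿ × (⊕ι ℤ) → ℝ` (with `ℝⁿ` a vector group and `⊕ι ℤ` countable discrete) is a
continuous surjective homomorphism, then its restriction to the vector factor is already
surjective. -/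
theorem vector_factor_surjective_real
    (n : ℕ) (ι : Type*) [Countable ι]
    [TopologicalSpace (ι →₀ ℤ)] [DiscreteTopology (ι →₀ ℤ)]
    (φ : ((Fin n → ℝ) × (ι →₀ ℤ)) →+ ℝ)
    (hcont : Continuous φ) (hsurj : Function.Surjective φ) :
    Function.Surjective (fun v : Fin n → ℝ => φ (v, 0)) :=
  vector_factor_surjective_real_general n ι φ hcont hsurj
end

section
/- Fix n ∈ ℕ and a countable type ι, and let G = (Fin n → ℝ) × (ι →₀ ℤ) be the topological additive group obtained as the product of the vector group ℝⁿ with its standard topology and the free abelian group ι →₀ ℤ with the discrete topology. Let 𝕋 = ℝ/ℤ be the circle group (the additive circle of period 1). If ψ : G → 𝕋 is a continuous surjective additive group homomorphism, then the additive homomorphism from (Fin n → ℝ) to 𝕋 given by v ↦ ψ(v, 0) is surjective. -/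
/-!
The image `H` of the vector factor is a connected subgroup of the circle. It is not trivial,
since otherwise the countable factor `ι →₀ ℤ` would map onto the uncountable circle. A
connected subgroup of the circle containing `x ≠ 0` contains, by the intermediate value
theorem applied to the norm, an element of every norm in `[0, ‖x‖]`; since elements of the
circle with equal norms agree up to sign, `H` contains the ball of radius `‖x‖` and is
therefore an open subgroup of a connected group, i.e. everything.
-/

open Metric Topology

theorem AddSubgroup.eq_top_of_mem_nhds_zero {G : Type*} [TopologicalSpace G] [AddGroup G]
    [IsTopologicalAddGroup G] [ConnectedSpace G] (H : AddSubgroup G) (hH : (H : Set G) ∈ 𝓝 0) :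
    H = ⊤ := by
  have hopen : IsOpen (H : Set G) := H.isOpen_of_mem_nhds hH
  exact SetLike.coe_injective <|
    IsClopen.eq_univ ⟨H.isClosed_of_isOpen hopen, hopen⟩ ⟨0, H.zero_mem⟩

namespace AddCircle

variable {p : ℝ}

theorem uncountable [Fact (0 < p)] : Uncountable (AddCircle p) := by
  refine ⟨fun h => ?_⟩
  have hIco : Countable (Set.Ico 0 (0 + p)) := (equivIco p 0).symm.injective.countable
  have hp : 0 + p ≤ 0 := Cardinal.Real.Ico_countable_iff.mp (Set.countable_coe_iff.mp hIco)
  linarith [(Fact.out : 0 < p)]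

theorem exists_coe_eq_and_abs_eq_norm (x : AddCircle p) :
    ∃ r : ℝ, (r : AddCircle p) = x ∧ |r| = ‖x‖ := by
  induction x using QuotientAddGroup.induction_on with
  | H s =>
  refine ⟨s - round (p⁻¹ * s) * p, ?_, (norm_eq p).symm⟩
  simp [coe_period]

theorem eq_or_eq_neg_of_norm_eq {x y : AddCircle p} (h : ‖x‖ = ‖y‖) : x = y ∨ x = -y := by
  obtain ⟨r, rfl, hr⟩ := exists_coe_eq_and_abs_eq_norm x
  obtain ⟨s, rfl, hs⟩ := exists_coe_eq_and_abs_eq_norm y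
  rcases abs_eq_abs.mp (hr.trans (h.trans hs.symm)) with rfl | rfl
  · exact .inl rfl
  · exact .inr (coe_neg ..)

theorem closedBall_subset_of_isPreconnected {H : AddSubgroup (AddCircle p)}
    (hH : IsPreconnected (H : Set (AddCircle p))) {x : AddCircle p} (hx : x ∈ H) :
    closedBall 0 ‖x‖ ⊆ (H : Set (AddCircle p)) := by
  intro y hy
  rw [mem_closedBall, dist_zero_right] at hy
  have hnorm : ‖y‖ ∈ (‖·‖) '' (H : Set (AddCircle p)) :=
    (hH.image _ continuous_norm.continuousOn).Icc_subset ⟨0, H.zero_mem, norm_zero⟩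
      ⟨x, hx, rfl⟩ ⟨norm_nonneg y, hy⟩
  obtain ⟨z, hz, hzy⟩ := hnorm
  rcases eq_or_eq_neg_of_norm_eq hzy.symm with rfl | rfl
  · exact hz
  · exact H.neg_mem hz

theorem addSubgroup_eq_top_of_isPreconnected [Fact (0 < p)] {H : AddSubgroup (AddCircle p)}
    (hH : IsPreconnected (H : Set (AddCircle p))) (hne : H ≠ ⊥) : H = ⊤ := by
  obtain ⟨⟨x, hx⟩, hx0⟩ := H.ne_bot_iff_exists_ne_zero.mp hne
  refine H.eq_top_of_mem_nhds_zero <|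
    Filter.mem_of_superset ?_ (closedBall_subset_of_isPreconnected hH hx)
  exact closedBall_mem_nhds _ (norm_pos_iff.mpr (by simpa using hx0))

end AddCircle

theorem vector_factor_surjective_circle_general
    (n : ℕ) (ι : Type*) [Countable ι]
    [TopologicalSpace (ι →₀ ℤ)]
    (ψ : ((Fin n → ℝ) × (ι →₀ ℤ)) →+ AddCircle (1 : ℝ))
    (hcont : Continuous ψ) (hsurj : Function.Surjective ψ) :
    Function.Surjective (fun v : Fin n → ℝ => ψ (v, 0)) := by
  set φ := ψ.comp (AddMonoidHom.inl _ _)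
  have hconn : IsPreconnected (φ.range : Set (AddCircle (1 : ℝ))) := by
    rw [AddMonoidHom.coe_range]
    exact isPreconnected_range (hcont.comp (Continuous.prodMk_left 0))
  have hne : φ.range ≠ ⊥ := by
    intro hbot
    have hφ (v : Fin n → ℝ) : ψ (v, 0) = 0 :=
      DFunLike.congr_fun (φ.range_eq_bot_iff.mp hbot) v
    have : Function.Surjective fun m : ι →₀ ℤ => ψ (0, m) := fun y => by
      obtain ⟨⟨v, m⟩, rfl⟩ := hsurj y
      refine ⟨m, ?_⟩
      show ψ (0, m) = ψ (v, m)
      rw [← zero_add (ψ (0, m)), ← hφ v, ← map_add, Prod.mk_add_mk, add_zero, zero_add]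
    exact AddCircle.uncountable.not_countable this.countable
  exact AddMonoidHom.range_eq_top.mp (AddCircle.addSubgroup_eq_top_of_isPreconnected hconn hne)

/-- If `ψ : ℝⁿ × (⊕ι ℤ) → ℝ/ℤ` (with `ℝⁿ` a vector group and `⊕ι ℤ` countable discrete) is
a continuous surjective homomorphism into the circle group, then its restriction to the
vector factor is already surjective. -/
theorem vector_factor_surjective_circle
    (n : ℕ) (ι : Type*) [Countable ι]
    [TopologicalSpace (ι →₀ ℤ)] [DiscreteTopology (ι →₀ ℤ)]
    (ψ : ((Fin n → ℝ) × (ι →₀ ℤ)) →+ AddCircle (1 : ℝ))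
    (hcont : Continuous ψ) (hsurj : Function.Surjective ψ) :
    Function.Surjective (fun v : Fin n → ℝ => ψ (v, 0)) :=
  vector_factor_surjective_circle_general n ι ψ hcont hsurj
end
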